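/- arXiv:1804.00989 — 5 statements merged into one kernel-verified Lean document; each statement's English description precedes it below -/
import Mathlib

section
/- Let b* minimize ‖Xb‖₂²/n over the set {b : ‖b_S‖₁ − ‖b_{−S}‖₁ = 1}, and assume κ̂(u,S) > 0 for some 0 ≤ u < 1. Then ‖b*_S‖₁ ≤ (κ̂(S) − u·κ̂(u,S)) / ((1−u)·κ̂(u,S)), where κ̂(v,S)² = min{ |S|·‖Xb‖²/n : ‖b_S‖₁ − v‖b_{−S}‖₁ = 1 } and κ̂(S) = κ̂(1,S). -/
/-!
Write `s = ‖b*_S‖₁` and `k = s − u‖b*_{−S}‖₁ = (1 − u)s + u > 0`. The rescaled vector `b*/k` is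
feasible for `κ̂(u,S)`, and the objective is quadratic, so `κ̂(u,S)·k ≤ √(|S|‖Xb*‖²/n) = κ̂(S)`.
Solving this for `s` is the claim.
-/

open Finset

noncomputable def l1 {p : ℕ} (b : Fin p → ℝ) : ℝ := ∑ j, |b j|

def restr {p : ℕ} (S : Finset (Fin p)) (b : Fin p → ℝ) : Fin p → ℝ :=
  fun j => if j ∈ S then b j else 0

noncomputable def qf {n p : ℕ} (X : Matrix (Fin n) (Fin p) ℝ) (b : Fin p → ℝ) : ℝ :=
  ∑ i, (X.mulVec b i) ^ 2

/-- The compatibility constant κ̂(v,S) (square root of the minimal value). -/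
noncomputable def kappaHat {n p : ℕ} (X : Matrix (Fin n) (Fin p) ℝ) (S : Finset (Fin p))
    (v : ℝ) : ℝ :=
  Real.sqrt (sInf {c : ℝ | ∃ b : Fin p → ℝ,
    l1 (restr S b) - v * l1 (restr Sᶜ b) = 1 ∧ c = (S.card : ℝ) * qf X b / n})

section

variable {n p : ℕ}

lemma l1_nonneg (b : Fin p → ℝ) : 0 ≤ l1 b :=
  sum_nonneg fun _ _ => abs_nonneg _

lemma l1_smul (c : ℝ) (b : Fin p → ℝ) : l1 (c • b) = |c| * l1 b := by
  simp only [l1, Pi.smul_apply, smul_eq_mul, abs_mul, mul_sum]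

lemma restr_smul (S : Finset (Fin p)) (c : ℝ) (b : Fin p → ℝ) :
    restr S (c • b) = c • restr S b := by
  funext j
  simp only [restr, Pi.smul_apply, smul_eq_mul]
  split_ifs <;> simp

lemma qf_smul (X : Matrix (Fin n) (Fin p) ℝ) (c : ℝ) (b : Fin p → ℝ) :
    qf X (c • b) = c ^ 2 * qf X b := by
  simp only [qf, Matrix.mulVec_smul, Pi.smul_apply, smul_eq_mul, mul_pow, mul_sum]

lemma scaledQf_nonneg (X : Matrix (Fin n) (Fin p) ℝ) (S : Finset (Fin p)) (b : Fin p → ℝ) :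
    0 ≤ (S.card : ℝ) * qf X b / n := by
  have : 0 ≤ qf X b := sum_nonneg fun _ _ => sq_nonneg _
  positivity

lemma kappaHat_le_of_feasible (X : Matrix (Fin n) (Fin p) ℝ) (S : Finset (Fin p)) {v : ℝ}
    {b : Fin p → ℝ} (hb : l1 (restr S b) - v * l1 (restr Sᶜ b) = 1) :
    kappaHat X S v ≤ Real.sqrt ((S.card : ℝ) * qf X b / n) := by
  refine Real.sqrt_le_sqrt (csInf_le ⟨0, ?_⟩ ⟨b, hb, rfl⟩)
  rintro _ ⟨b', -, rfl⟩
  exact scaledQf_nonneg X S b'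

lemma kappaHat_eq_of_isMin (X : Matrix (Fin n) (Fin p) ℝ) (S : Finset (Fin p)) {v : ℝ}
    {bstar : Fin p → ℝ} (hcon : l1 (restr S bstar) - v * l1 (restr Sᶜ bstar) = 1)
    (hmin : ∀ b : Fin p → ℝ, l1 (restr S b) - v * l1 (restr Sᶜ b) = 1 →
      qf X bstar / n ≤ qf X b / n) :
    kappaHat X S v = Real.sqrt ((S.card : ℝ) * qf X bstar / n) := by
  refine (kappaHat_le_of_feasible X S hcon).antisymm (Real.sqrt_le_sqrt ?_)
  refine le_csInf ⟨_, bstar, hcon, rfl⟩ ?_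
  rintro _ ⟨b, hb, rfl⟩
  simp only [mul_div_assoc]
  exact mul_le_mul_of_nonneg_left (hmin b hb) (Nat.cast_nonneg _)

lemma kappaHat_mul_le (X : Matrix (Fin n) (Fin p) ℝ) (S : Finset (Fin p)) {v k : ℝ}
    {b : Fin p → ℝ} (hk : 0 < k) (hb : l1 (restr S b) - v * l1 (restr Sᶜ b) = k) :
    kappaHat X S v * k ≤ Real.sqrt ((S.card : ℝ) * qf X b / n) := by
  have hfeas : l1 (restr S (k⁻¹ • b)) - v * l1 (restr Sᶜ (k⁻¹ • b)) = 1 := by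
    rw [restr_smul, restr_smul, l1_smul, l1_smul, abs_of_pos (inv_pos.mpr hk),
      mul_left_comm v, ← mul_sub, hb, inv_mul_cancel₀ hk.ne']
  have hscale : (S.card : ℝ) * qf X (k⁻¹ • b) / n = ((S.card : ℝ) * qf X b / n) / k ^ 2 := by
    rw [qf_smul]
    ring
  have h := kappaHat_le_of_feasible X S hfeas
  rw [hscale, Real.sqrt_div (scaledQf_nonneg X S b), Real.sqrt_sq hk.le] at h
  exact (le_div_iff₀ hk).mp h

end

theorem stmt1_general {n p : ℕ} (X : Matrix (Fin n) (Fin p) ℝ) (S : Finset (Fin p))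
    (bstar : Fin p → ℝ)
    (hcon : l1 (restr S bstar) - l1 (restr Sᶜ bstar) = 1)
    (hmin : ∀ b : Fin p → ℝ, l1 (restr S b) - l1 (restr Sᶜ b) = 1 →
      qf X bstar / n ≤ qf X b / n)
    (u : ℝ) (hu1 : u < 1) (hk : 0 < kappaHat X S u) :
    l1 (restr S bstar) ≤
      (kappaHat X S 1 - u * kappaHat X S u) / ((1 - u) * kappaHat X S u) := by
  set s := l1 (restr S bstar)
  have hsc : l1 (restr Sᶜ bstar) = s - 1 := by linarith
  have hs : 1 ≤ s := by linarith [l1_nonneg (restr Sᶜ bstar)]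
  have hk_pos : 0 < (1 - u) * s + u := by nlinarith
  have hkey : kappaHat X S u * ((1 - u) * s + u) ≤ kappaHat X S 1 := by
    rw [kappaHat_eq_of_isMin X S (v := 1) (by simpa using hcon) (by simpa using hmin)]
    exact kappaHat_mul_le X S hk_pos (by rw [hsc]; ring)
  rw [le_div_iff₀ (mul_pos (by linarith) hk)]
  linarith

theorem stmt1 {n p : ℕ} (X : Matrix (Fin n) (Fin p) ℝ) (S : Finset (Fin p))
    (bstar : Fin p → ℝ)
    (hcon : l1 (restr S bstar) - l1 (restr Sᶜ bstar) = 1)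
    (hmin : ∀ b : Fin p → ℝ, l1 (restr S b) - l1 (restr Sᶜ b) = 1 →
      qf X bstar / n ≤ qf X b / n)
    (u : ℝ) (hu0 : 0 ≤ u) (hu1 : u < 1) (hk : 0 < kappaHat X S u) :
    l1 (restr S bstar) ≤
      (kappaHat X S 1 - u * kappaHat X S u) / ((1 - u) * kappaHat X S u) :=
  stmt1_general X S bstar hcon hmin u hu1 hk
end

section
/- Suppose κ²(S₀) := min{ s₀·‖Σ₀^{1/2} b‖₂² : ‖b_{S₀}‖₁ − ‖b_{−S₀}‖₁ = 1 } > 0, where Σ₀ is positive semidefinite. If β* solves the KKT conditions nΣ₀(β* − β⁰) + λζ* = 0 with ζ* ∈ ∂‖β*‖₁ (equivalently β* minimizes n‖Σ₀^{1/2}(b−β⁰)‖₂² + 2λ‖b‖₁), and S₀ is the support of β⁰ with |S₀| = s₀, then n‖Σ₀^{1/2}(β* − β⁰)‖₂² ≤ s₀ λ² / (n κ²(S₀)). -/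
/-! Write Δ = β* − β⁰. Pairing the KKT equation with Δ and using ζ ∈ ∂‖β*‖₁, ‖ζ‖_∞ ≤ 1 and
supp β⁰ ⊆ S₀ gives the basic inequality n‖Σ₀^{1/2}Δ‖² ≤ λ t with t = ‖Δ_{S₀}‖₁ − ‖Δ_{−S₀}‖₁.
If the left side is positive then t > 0, and Δ / t is admissible for κ², so κ² t² ≤ s₀‖Σ₀^{1/2}Δ‖².
Squaring the basic inequality and combining the two bounds gives the claim. -/

open Finset

open Matrix

/-- κ²(S) in the paper's notation. -/
noncomputable def compatibilityConst {p : ℕ} (S : Finset (Fin p)) (Sig : Matrix (Fin p) (Fin p) ℝ) :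
    ℝ :=
  sInf {c : ℝ | ∃ b : Fin p → ℝ,
    l1 (restr S b) - l1 (restr Sᶜ b) = 1 ∧ c = (S.card : ℝ) * (∑ j, b j * (Sig.mulVec b) j)}

lemma Real.bddBelow_of_sInf_pos {s : Set ℝ} (hs : 0 < sInf s) : BddBelow s := by
  by_contra h
  rw [Real.sInf_of_not_bddBelow h] at hs
  exact hs.false

section
variable {p : ℕ}

lemma l1_restr_sub_l1_restr_compl (S : Finset (Fin p)) (b : Fin p → ℝ) :
    l1 (restr S b) - l1 (restr Sᶜ b) = ∑ j, if j ∈ S then |b j| else -|b j| := by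
  simp only [l1, restr, ← Finset.sum_sub_distrib, Finset.mem_compl]
  refine Finset.sum_congr rfl fun j _ => ?_
  split_ifs <;> simp

lemma l1_restr_smul (S : Finset (Fin p)) (c : ℝ) (b : Fin p → ℝ) :
    l1 (restr S (c • b)) = |c| * l1 (restr S b) := by
  simp only [l1, restr, Finset.mul_sum]
  refine Finset.sum_congr rfl fun j _ => ?_
  split_ifs <;> simp [abs_mul]

lemma subgradient_dotProduct_sub_le {S : Finset (Fin p)} {b b₀ ζ : Fin p → ℝ}
    (hsupp : ∀ j ∉ S, b₀ j = 0) (hζ : ∀ j, |ζ j| ≤ 1) (hζb : ζ ⬝ᵥ b = l1 b) :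
    ζ ⬝ᵥ (b₀ - b) ≤ l1 (restr S (b - b₀)) - l1 (restr Sᶜ (b - b₀)) := by
  rw [dotProduct_sub, hζb, l1, l1_restr_sub_l1_restr_compl, dotProduct, ← Finset.sum_sub_distrib]
  refine Finset.sum_le_sum fun j _ => ?_
  split_ifs with hj
  · have hζb₀ : ζ j * b₀ j ≤ |b₀ j| :=
      (le_abs_self _).trans (by rw [abs_mul]; exact mul_le_of_le_one_left (abs_nonneg _) (hζ j))
    have := abs_sub_abs_le_abs_sub (b₀ j) (b j)
    rw [abs_sub_comm] at this
    simp only [Pi.sub_apply]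
    linarith
  · simp [hsupp j hj]

lemma lasso_basic_inequality {n lam : ℝ} {S : Finset (Fin p)} {Sig : Matrix (Fin p) (Fin p) ℝ}
    {b b₀ ζ : Fin p → ℝ} (hlam : 0 ≤ lam) (hsupp : ∀ j ∉ S, b₀ j = 0)
    (hKKT : ∀ j, n * (Sig *ᵥ (b - b₀)) j + lam * ζ j = 0)
    (hζ : ∀ j, |ζ j| ≤ 1) (hζb : ζ ⬝ᵥ b = l1 b) :
    n * ((b - b₀) ⬝ᵥ Sig *ᵥ (b - b₀)) ≤
      lam * (l1 (restr S (b - b₀)) - l1 (restr Sᶜ (b - b₀))) := by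
  have hgrad : n • Sig *ᵥ (b - b₀) = -(lam • ζ) := by
    ext j
    simp only [Pi.smul_apply, Pi.neg_apply, smul_eq_mul]
    linarith [hKKT j]
  have hpair : n * ((b - b₀) ⬝ᵥ Sig *ᵥ (b - b₀)) = lam * (ζ ⬝ᵥ (b₀ - b)) := by
    rw [← smul_eq_mul, ← dotProduct_smul, hgrad, dotProduct_neg, dotProduct_smul, smul_eq_mul,
      dotProduct_comm, ← neg_sub b₀ b, dotProduct_neg, mul_neg, neg_neg]
  rw [hpair]
  exact mul_le_mul_of_nonneg_left (subgradient_dotProduct_sub_le hsupp hζ hζb) hlam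

lemma compatibilityConst_mul_sq_le {S : Finset (Fin p)} {Sig : Matrix (Fin p) (Fin p) ℝ}
    (hk : 0 < compatibilityConst S Sig) {b : Fin p → ℝ}
    (ht : 0 < l1 (restr S b) - l1 (restr Sᶜ b)) :
    compatibilityConst S Sig * (l1 (restr S b) - l1 (restr Sᶜ b)) ^ 2 ≤
      S.card * (b ⬝ᵥ Sig *ᵥ b) := by
  set t := l1 (restr S b) - l1 (restr Sᶜ b)
  have hnorm : l1 (restr S (t⁻¹ • b)) - l1 (restr Sᶜ (t⁻¹ • b)) = 1 := by
    rw [l1_restr_smul, l1_restr_smul, ← mul_sub, abs_of_pos (inv_pos.2 ht), inv_mul_cancel₀ ht.ne']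
  have hle := csInf_le (Real.bddBelow_of_sInf_pos hk) ⟨t⁻¹ • b, hnorm, rfl⟩
  change compatibilityConst S Sig ≤ S.card * ((t⁻¹ • b) ⬝ᵥ Sig *ᵥ (t⁻¹ • b)) at hle
  rw [mulVec_smul, dotProduct_smul, smul_dotProduct, smul_eq_mul, smul_eq_mul] at hle
  calc compatibilityConst S Sig * t ^ 2
      ≤ S.card * (t⁻¹ * (t⁻¹ * (b ⬝ᵥ Sig *ᵥ b))) * t ^ 2 := by gcongr
    _ = S.card * (b ⬝ᵥ Sig *ᵥ b) := by field_simp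

end

lemma le_div_of_le_mul_of_mul_sq_le {n q lam t s K : ℝ} (hn : 0 ≤ n) (hK : 0 < K)
    (hnq : 0 < n * q) (hbasic : n * q ≤ lam * t) (hcompat : K * t ^ 2 ≤ s * q) :
    n * q ≤ s * lam ^ 2 / (n * K) := by
  have hn : 0 < n := lt_of_le_of_ne hn (by rintro rfl; simp at hnq)
  have hq : 0 < q := pos_of_mul_pos_right hnq hn.le
  have hsq : (n * q) ^ 2 ≤ (lam * t) ^ 2 := pow_le_pow_left₀ hnq.le hbasic 2
  rw [le_div_iff₀ (by positivity)]
  nlinarith [mul_le_mul_of_nonneg_left hsq hK.le]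

theorem stmt8_general {p : ℕ} (n : ℕ) (Sig : Matrix (Fin p) (Fin p) ℝ)
    (lam : ℝ) (hlam : 0 < lam)
    (beta0 : Fin p → ℝ) (S0 : Finset (Fin p))
    (hS0 : ∀ j, j ∈ S0 ↔ beta0 j ≠ 0)
    (hk : 0 < sInf {c : ℝ | ∃ b : Fin p → ℝ,
        l1 (restr S0 b) - l1 (restr S0ᶜ b) = 1 ∧
        c = (S0.card : ℝ) * (∑ j, b j * (Sig.mulVec b) j)})
    (betastar zeta : Fin p → ℝ)
    (hKKT : ∀ j, (n : ℝ) * (Sig.mulVec (betastar - beta0)) j + lam * zeta j = 0)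
    (hzeta1 : ∀ j, |zeta j| ≤ 1)
    (hzeta2 : (∑ j, zeta j * betastar j) = l1 betastar) :
    (n : ℝ) * (∑ j, (betastar j - beta0 j) * (Sig.mulVec (betastar - beta0)) j) ≤
      (S0.card : ℝ) * lam ^ 2 /
        ((n : ℝ) * sInf {c : ℝ | ∃ b : Fin p → ℝ,
          l1 (restr S0 b) - l1 (restr S0ᶜ b) = 1 ∧
          c = (S0.card : ℝ) * (∑ j, b j * (Sig.mulVec b) j)}) := by
  change 0 < compatibilityConst S0 Sig at hk
  change (n : ℝ) * ((betastar - beta0) ⬝ᵥ Sig *ᵥ (betastar - beta0)) ≤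
    S0.card * lam ^ 2 / (n * compatibilityConst S0 Sig)
  have hsupp : ∀ j ∉ S0, beta0 j = 0 := fun j hj => not_not.1 (mt (hS0 j).2 hj)
  have hbasic := lasso_basic_inequality (S := S0) hlam.le hsupp hKKT hzeta1 hzeta2
  rcases le_or_gt ((n : ℝ) * ((betastar - beta0) ⬝ᵥ Sig *ᵥ (betastar - beta0))) 0 with hle | hpos
  · exact hle.trans (div_nonneg (by positivity) (mul_nonneg n.cast_nonneg hk.le))
  have ht := pos_of_mul_pos_right (hpos.trans_le hbasic) hlam.le
  exact le_div_of_le_mul_of_mul_sq_le n.cast_nonneg hk hpos hbasic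
    (compatibilityConst_mul_sq_le hk ht)

theorem stmt8 {p : ℕ} (n : ℕ) (Sig : Matrix (Fin p) (Fin p) ℝ) (hSig : Sig.PosSemidef)
    (lam : ℝ) (hlam : 0 < lam)
    (beta0 : Fin p → ℝ) (S0 : Finset (Fin p))
    (hS0 : ∀ j, j ∈ S0 ↔ beta0 j ≠ 0)
    (hk : 0 < sInf {c : ℝ | ∃ b : Fin p → ℝ,
        l1 (restr S0 b) - l1 (restr S0ᶜ b) = 1 ∧
        c = (S0.card : ℝ) * (∑ j, b j * (Sig.mulVec b) j)})
    (betastar zeta : Fin p → ℝ)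
    (hKKT : ∀ j, (n : ℝ) * (Sig.mulVec (betastar - beta0)) j + lam * zeta j = 0)
    (hzeta1 : ∀ j, |zeta j| ≤ 1)
    (hzeta2 : (∑ j, zeta j * betastar j) = l1 betastar) :
    (n : ℝ) * (∑ j, (betastar j - beta0 j) * (Sig.mulVec (betastar - beta0)) j) ≤
      (S0.card : ℝ) * lam ^ 2 /
        ((n : ℝ) * sInf {c : ℝ | ∃ b : Fin p → ℝ,
          l1 (restr S0 b) - l1 (restr S0ᶜ b) = 1 ∧
          c = (S0.card : ℝ) * (∑ j, b j * (Sig.mulVec b) j)}) :=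
  stmt8_general n Sig lam hlam beta0 S0 hS0 hk betastar zeta hKKT hzeta1 hzeta2
end

section
/- Let β* solve nΣ₀(β* − β⁰) + λζ* = 0 with ζ* ∈ ∂‖β*‖₁, and let 0 ≤ ν < 1. Then the set S*(ν) := {j : |ζ*_j| ≥ 1 − ν} satisfies |S*(ν)| ≤ (Λ²_max / (1−ν)²) · (n²/λ²) · ‖Σ₀^{1/2}(β* − β⁰)‖₂², where Λ²_max is the largest eigenvalue of Σ₀. -/
/-!
Writing `d = β* − β⁰`, the KKT condition says `ζ* = −(n/λ) Σ₀ d`. Every coordinate in `S*(ν)`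
contributes at least `(1−ν)²` to `‖ζ*‖²`, so `(1−ν)² |S*(ν)| ≤ (n/λ)² ‖Σ₀ d‖²`. Finally
`‖Σ₀ d‖² = (Σ₀^{1/2} d)ᵀ Σ₀ (Σ₀^{1/2} d) ≤ Λ²_max ‖Σ₀^{1/2} d‖² = Λ²_max dᵀ Σ₀ d`.
-/

open Finset

open Matrix

section

variable {ι : Type*} [Fintype ι]

open scoped MatrixOrder in
theorem Matrix.PosSemidef.mulVec_dotProduct_mulVec_le {A : Matrix ι ι ℝ} (hA : A.PosSemidef)
    {c : ℝ} (hc : ∀ v, v ⬝ᵥ A *ᵥ v ≤ c * (v ⬝ᵥ v)) (x : ι → ℝ) :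
    A *ᵥ x ⬝ᵥ A *ᵥ x ≤ c * (x ⬝ᵥ A *ᵥ x) := by
  classical
  set S := CFC.sqrt A
  have hSS : S * S = A := CFC.sqrt_mul_sqrt_self A hA.nonneg
  have hS : Sᵀ = S := by
    simpa only [conjTranspose_eq_transpose_of_trivial] using
      (CFC.sqrt_nonneg A).posSemidef.isHermitian.eq
  have hS_dotProduct (u w : ι → ℝ) : S *ᵥ u ⬝ᵥ w = u ⬝ᵥ S *ᵥ w := by
    rw [dotProduct_mulVec, ← vecMul_transpose, hS]
  have hAS (u : ι → ℝ) : A *ᵥ u = S *ᵥ S *ᵥ u := by rw [mulVec_mulVec, hSS]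
  calc A *ᵥ x ⬝ᵥ A *ᵥ x = S *ᵥ x ⬝ᵥ A *ᵥ (S *ᵥ x) := by rw [hAS x, hS_dotProduct, ← hAS]
    _ ≤ c * (S *ᵥ x ⬝ᵥ S *ᵥ x) := hc _
    _ = c * (x ⬝ᵥ A *ᵥ x) := by rw [hS_dotProduct, ← hAS]

theorem card_filter_le_abs_mul_sq_le_sum_sq (z : ι → ℝ) {t : ℝ} (ht : 0 ≤ t) :
    #{j | t ≤ |z j|} * t ^ 2 ≤ ∑ j, z j ^ 2 := by
  calc #{j | t ≤ |z j|} * t ^ 2 = ∑ _j ∈ {j | t ≤ |z j|}, t ^ 2 := by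
        rw [sum_const, nsmul_eq_mul]
    _ ≤ ∑ j ∈ {j | t ≤ |z j|}, z j ^ 2 := sum_le_sum fun j hj => by
        simpa only [sq_abs] using pow_le_pow_left₀ ht (mem_filter.mp hj).2 2
    _ ≤ ∑ j, z j ^ 2 := sum_le_univ_sum_of_nonneg fun j => sq_nonneg _

end

theorem stmt9_general {p : ℕ} (n : ℕ) (Sig : Matrix (Fin p) (Fin p) ℝ) (hSig : Sig.PosSemidef)
    (lamMaxSq : ℝ)
    (hmax : ∀ b : Fin p → ℝ, (∑ j, b j * (Sig.mulVec b) j) ≤ lamMaxSq * ∑ j, (b j) ^ 2)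
    (lam : ℝ) (hlam : 0 < lam)
    (beta0 betastar zeta : Fin p → ℝ)
    (hKKT : ∀ j, (n : ℝ) * (Sig.mulVec (betastar - beta0)) j + lam * zeta j = 0)
    (nu : ℝ) (hnu1 : nu < 1) :
    ((Finset.univ.filter (fun j => 1 - nu ≤ |zeta j|)).card : ℝ) ≤
      (lamMaxSq / (1 - nu) ^ 2) * ((n : ℝ) ^ 2 / lam ^ 2) *
        (∑ j, (betastar j - beta0 j) * (Sig.mulVec (betastar - beta0)) j) := by
  set d := betastar - beta0
  have hzeta : zeta = -((n : ℝ) / lam) • Sig *ᵥ d := by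
    ext j
    rw [Pi.smul_apply, smul_eq_mul]
    field_simp
    linarith [hKKT j]
  have hν : 0 < 1 - nu := sub_pos.mpr hnu1
  have hbound := hSig.mulVec_dotProduct_mulVec_le (c := lamMaxSq)
    (fun v => by simpa only [dotProduct, sq] using hmax v) d
  have hsum : ∑ j, zeta j ^ 2 = ((n : ℝ) / lam) ^ 2 * (Sig *ᵥ d ⬝ᵥ Sig *ᵥ d) := by
    simp only [hzeta, dotProduct, mul_sum, Pi.smul_apply, smul_eq_mul]
    exact sum_congr rfl fun j _ => by ring
  have hcard : #{j | 1 - nu ≤ |zeta j|} * (1 - nu) ^ 2 ≤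
      ((n : ℝ) / lam) ^ 2 * (lamMaxSq * (d ⬝ᵥ Sig *ᵥ d)) :=
    calc _ ≤ ∑ j, zeta j ^ 2 := card_filter_le_abs_mul_sq_le_sum_sq zeta hν.le
      _ ≤ _ := by rw [hsum]; exact mul_le_mul_of_nonneg_left hbound (by positivity)
  change _ ≤ _ * (d ⬝ᵥ Sig *ᵥ d)
  calc _ = #{j | 1 - nu ≤ |zeta j|} * (1 - nu) ^ 2 / (1 - nu) ^ 2 := by field_simp
    _ ≤ ((n : ℝ) / lam) ^ 2 * (lamMaxSq * (d ⬝ᵥ Sig *ᵥ d)) / (1 - nu) ^ 2 := by gcongr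
    _ = _ := by ring

theorem stmt9 {p : ℕ} (n : ℕ) (Sig : Matrix (Fin p) (Fin p) ℝ) (hSig : Sig.PosSemidef)
    (lamMaxSq : ℝ)
    (hmax : ∀ b : Fin p → ℝ, (∑ j, b j * (Sig.mulVec b) j) ≤ lamMaxSq * ∑ j, (b j) ^ 2)
    (lam : ℝ) (hlam : 0 < lam)
    (beta0 betastar zeta : Fin p → ℝ)
    (hKKT : ∀ j, (n : ℝ) * (Sig.mulVec (betastar - beta0)) j + lam * zeta j = 0)
    (hzeta1 : ∀ j, |zeta j| ≤ 1)
    (hzeta2 : (∑ j, zeta j * betastar j) = l1 betastar)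
    (nu : ℝ) (hnu0 : 0 ≤ nu) (hnu1 : nu < 1) :
    ((Finset.univ.filter (fun j => 1 - nu ≤ |zeta j|)).card : ℝ) ≤
      (lamMaxSq / (1 - nu) ^ 2) * ((n : ℝ) ^ 2 / lam ^ 2) *
        (∑ j, (betastar j - beta0 j) * (Sig.mulVec (betastar - beta0)) j) :=
  stmt9_general n Sig hSig lamMaxSq hmax lam hlam beta0 betastar zeta hKKT nu hnu1
end

section
/- Let X ∈ ℝ^{n×n} be the lower-triangular matrix of ones X_{j,i} = 1{j ≥ i}, let s ≥ 1, and let S = {d₁+1, d₁+d₂+1, …, d₁+⋯+d_s+1} with d_j ≥ 2 even for j = 2,…,s and d_{s+1} := n − Σ_{j=1}^s d_j ≥ 2. Define κ̂²(S) := min{ (s+1)·‖Xb‖₂²/n : ‖b_S‖₁ − ‖b_{−(S∪{1})}‖₁ = 1 }. Then κ̂²(S) = (s+1) / ( n/d₁ + Σ_{j=2}^s 4n/d_j + n/d_{s+1} ). -/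
/-!
Write `f = csum b`, so that `b (P_j + 1)` is the step of `f` across the block boundary
`P_j = d₁ + ⋯ + d_j`. Cut `(0, n]` into `2s` windows (the first and the last block whole, every
other block halved), so that each jump separates two windows. On a window, `|f|` at any point is
at most its mean over the window plus the variation `∑ |b i|` strictly inside it, which involves
no jump. Summing over the jumps, `1 = ‖b_S‖₁ - ‖b_{-(S ∪ {1})}‖₁` is at most the sum of the
window means of `|f|`, and Cauchy–Schwarz bounds its square by `(∑ 1 / ℓ_k) ‖f‖²`, where `ℓ_k`
are the window lengths and `∑ 1 / ℓ_k = 1 / d₁ + ∑ 4 / d_j + 1 / d_{s+1}`. Equality holds for the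
step function `± 1 / (ℓ_k ∑ 1 / ℓ)` on the `k`-th window, with signs alternating across the jumps;
it has no other steps because the two halves of a block have equal length, which is where the
evenness of the `d_j` enters.
-/

open Finset

/-- Position of the `j`-th jump (1-based): `pos d j = d₁ + ⋯ + d_j`. -/
def pos (d : ℕ → ℕ) (j : ℕ) : ℕ := ∑ i ∈ Finset.Icc 1 j, d i

/-- The cumulative sum `f i = b 1 + ⋯ + b i` (i.e. `f = X b` for the
lower-triangular matrix of ones `X_{j,i} = 1{j ≥ i}`). -/
noncomputable def csum (b : ℕ → ℝ) (i : ℕ) : ℝ := ∑ k ∈ Finset.Icc 1 i, b k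

/-- The jump set `S = {d₁+1, d₁+d₂+1, …, d₁+⋯+d_s+1}`. -/
def jumpSet (d : ℕ → ℕ) (s : ℕ) : Finset ℕ :=
  (Finset.Icc 1 s).image (fun j => pos d j + 1)

lemma sum_range_two_mul {M : Type*} [AddCommMonoid M] (F : ℕ → M) (s : ℕ) :
    ∑ j ∈ range (2 * s), F j = ∑ m ∈ range s, (F (2 * m) + F (2 * m + 1)) := by
  induction s with
  | zero => simp
  | succ s ih => rw [mul_add_one, sum_range_succ, sum_range_succ, ih, sum_range_succ, add_assoc]

lemma csum_succ (b : ℕ → ℝ) (i : ℕ) : csum b (i + 1) = csum b i + b (i + 1) :=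
  sum_Icc_succ_top (by omega) b

lemma csum_sub_csum (b : ℕ → ℝ) {u v : ℕ} (h : u ≤ v) :
    csum b v - csum b u = ∑ i ∈ Ioc u v, b i := by
  rw [csum, csum, ← zero_add 1, Icc_add_one_left_eq_Ioc, Icc_add_one_left_eq_Ioc,
    ← sum_Ioc_consecutive _ (Nat.zero_le u) h, add_sub_cancel_left]

lemma csum_sub_pred (g : ℕ → ℝ) (hg : g 0 = 0) (i : ℕ) :
    csum (fun k => g k - g (k - 1)) i = g i := by
  induction i with
  | zero => simp [csum, hg]
  | succ i ih => rw [csum_succ, ih, Nat.add_sub_cancel, add_sub_cancel]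

lemma abs_csum_sub_le (b : ℕ → ℝ) {lo hi u v : ℕ} (hu : u ∈ Ioc lo hi)
    (hv : v ∈ Ioc lo hi) : |csum b v - csum b u| ≤ ∑ i ∈ Ioc (lo + 1) hi, |b i| := by
  wlog huv : u ≤ v generalizing u v
  · rw [abs_sub_comm]
    exact this hv hu (by omega)
  rw [mem_Ioc] at hu hv
  rw [csum_sub_csum b huv]
  exact (abs_sum_le_sum_abs _ _).trans (sum_le_sum_of_subset_of_nonneg
    (Ioc_subset_Ioc (by omega) hv.2) fun _ _ _ => abs_nonneg _)

noncomputable def meanAbs (F : ℕ → ℝ) (lo hi : ℕ) : ℝ :=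
  (∑ u ∈ Ioc lo hi, |F u|) / (hi - lo : ℕ)

lemma abs_csum_le_meanAbs_add (b : ℕ → ℝ) {lo hi p : ℕ} (hp : p ∈ Ioc lo hi) :
    |csum b p| ≤ meanAbs (csum b) lo hi + ∑ i ∈ Ioc (lo + 1) hi, |b i| := by
  set D := ∑ i ∈ Ioc (lo + 1) hi, |b i|
  have hlen : (0 : ℝ) < (hi - lo : ℕ) := by
    rw [mem_Ioc] at hp
    exact_mod_cast (by omega : 0 < hi - lo)
  have hsum : ((hi - lo : ℕ) : ℝ) * |csum b p| ≤
      ∑ u ∈ Ioc lo hi, |csum b u| + (hi - lo : ℕ) * D := by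
    calc ((hi - lo : ℕ) : ℝ) * |csum b p| = ∑ _u ∈ Ioc lo hi, |csum b p| := by
          rw [sum_const, Nat.card_Ioc, nsmul_eq_mul]
      _ ≤ ∑ u ∈ Ioc lo hi, (|csum b u| + D) := sum_le_sum fun u hu => by
          linarith [abs_csum_sub_le b hu hp, abs_sub_abs_le_abs_sub (csum b p) (csum b u)]
      _ = _ := by rw [sum_add_distrib, sum_const, Nat.card_Ioc, nsmul_eq_mul]
  rw [meanAbs, div_add' _ _ _ hlen.ne', le_div_iff₀ hlen]
  linarith

lemma abs_le_meanAbs_add_meanAbs (b : ℕ → ℝ) {lo p hi : ℕ} (hlo : lo < p) (hhi : p < hi) :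
    |b (p + 1)| ≤ meanAbs (csum b) lo p + meanAbs (csum b) p hi +
      (∑ i ∈ Ioc (lo + 1) p, |b i| + ∑ i ∈ Ioc (p + 1) hi, |b i|) := by
  have hleft := abs_csum_le_meanAbs_add b (mem_Ioc.2 ⟨hlo, le_rfl⟩)
  have hright := abs_csum_le_meanAbs_add b (lo := p) (p := p + 1) (mem_Ioc.2 ⟨by omega, hhi⟩)
  have hjump : b (p + 1) = csum b (p + 1) - csum b p := by rw [csum_succ]; ring
  rw [hjump]
  linarith [abs_sub (csum b (p + 1)) (csum b p)]

section Cuts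

variable {t : ℕ → ℕ}

lemma sum_Ioc_cuts {M : Type*} [AddCommMonoid M] (ht : Monotone t) (F : ℕ → M) (N : ℕ) :
    ∑ j ∈ range N, ∑ i ∈ Ioc (t j) (t (j + 1)), F i = ∑ i ∈ Ioc (t 0) (t N), F i := by
  induction N with
  | zero => simp
  | succ N ih => rw [sum_range_succ, ih, sum_Ioc_consecutive _ (ht N.zero_le) (ht N.le_succ)]

lemma exists_mem_Ioc_cut {N i : ℕ} (hi : i ∈ Ioc (t 0) (t N)) :
    ∃ j < N, i ∈ Ioc (t j) (t (j + 1)) := by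
  induction N with
  | zero => simp at hi
  | succ N ih =>
    rw [mem_Ioc] at hi
    by_cases h : i ≤ t N
    · obtain ⟨j, hj, hij⟩ := ih (mem_Ioc.2 ⟨hi.1, h⟩)
      exact ⟨j, by omega, hij⟩
    · exact ⟨N, by omega, mem_Ioc.2 ⟨by omega, hi.2⟩⟩

lemma notMem_Ioc_cut (ht : Monotone t) {i j k : ℕ} (hk : k ≠ j)
    (hi : i ∈ Ioc (t j) (t (j + 1))) : i ∉ Ioc (t k) (t (k + 1)) := by
  rw [mem_Ioc] at hi ⊢
  rcases Nat.lt_or_gt_of_ne hk with h | h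
  · have := ht (show k + 1 ≤ j by omega); omega
  · have := ht (show j + 1 ≤ k by omega); omega

lemma cast_sub_pos (ht : StrictMono t) (j : ℕ) : (0 : ℝ) < (t (j + 1) - t j : ℕ) :=
  Nat.cast_pos.2 (Nat.sub_pos_of_lt (ht j.lt_add_one))

noncomputable def invLenSum (t : ℕ → ℕ) (N : ℕ) : ℝ :=
  ∑ j ∈ range N, 1 / ((t (j + 1) - t j : ℕ) : ℝ)

lemma invLenSum_pos (ht : StrictMono t) {N : ℕ} (hN : 0 < N) : 0 < invLenSum t N :=
  sum_pos (fun j _ => one_div_pos.2 (cast_sub_pos ht j)) (nonempty_range_iff.2 hN.ne')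

lemma sq_sum_meanAbs_le (ht : Monotone t) (F : ℕ → ℝ) (N : ℕ) :
    (∑ j ∈ range N, meanAbs F (t j) (t (j + 1))) ^ 2 ≤
      invLenSum t N * ∑ i ∈ Ioc (t 0) (t N), F i ^ 2 := by
  rw [invLenSum, ← sum_Ioc_cuts ht]
  refine sum_sq_le_sum_mul_sum_of_sq_le_mul _ (fun _ _ => by positivity)
    (fun _ _ => sum_nonneg fun _ _ => sq_nonneg _) fun j _ => ?_
  have hcs := sq_sum_le_card_mul_sum_sq (s := Ioc (t j) (t (j + 1))) (f := fun i => |F i|)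
  simp only [sq_abs, Nat.card_Ioc] at hcs
  rw [meanAbs, div_pow]
  rcases (Nat.cast_nonneg (t (j + 1) - t j) : (0 : ℝ) ≤ _).eq_or_lt with hlen | hlen
  · simp [← hlen]
  · rw [div_le_iff₀ (by positivity)]
    exact hcs.trans_eq (by field_simp)

def jumps (t : ℕ → ℕ) (s : ℕ) : Finset ℕ :=
  (range s).image fun m => t (2 * m + 1) + 1

lemma sum_jumps {M : Type*} [AddCommMonoid M] (ht : StrictMono t) (s : ℕ) (F : ℕ → M) :
    ∑ i ∈ jumps t s, F i = ∑ m ∈ range s, F (t (2 * m + 1) + 1) :=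
  sum_image fun _ _ _ _ h => by have := ht.injective (Nat.add_right_cancel h); omega

lemma notMem_jumps (ht : Monotone t) (s : ℕ) {i j : ℕ}
    (hi : i ∈ Ioc (t j + 1) (t (j + 1))) : i ∉ jumps t s := by
  simp only [jumps, mem_image, mem_range, not_exists, not_and]
  rw [mem_Ioc] at hi
  intro m _ hm
  rcases le_or_gt (2 * m + 1) j with h | h
  · have := ht h; omega
  · have := ht (show j + 1 ≤ 2 * m + 1 by omega); omega

lemma sum_interior_le_sum_sdiff_jumps (ht : Monotone t) (s : ℕ) (b : ℕ → ℝ) :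
    ∑ j ∈ range (2 * s), ∑ i ∈ Ioc (t j + 1) (t (j + 1)), |b i| ≤
      ∑ i ∈ Icc 2 (t (2 * s)) \ jumps t s, |b i| := by
  set A := Icc 2 (t (2 * s)) \ jumps t s
  have hA : ∀ j < 2 * s, ∀ i ∈ Ioc (t j + 1) (t (j + 1)), i ∈ A := fun j hj i hi => by
    have := ht (show j + 1 ≤ 2 * s by omega)
    refine mem_sdiff.2 ⟨?_, notMem_jumps ht s hi⟩
    rw [mem_Ioc] at hi
    exact mem_Icc.2 ⟨by omega, by omega⟩
  calc _ ≤ ∑ j ∈ range (2 * s), ∑ i ∈ Ioc (t j) (t (j + 1)), if i ∈ A then |b i| else 0 := by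
        refine sum_le_sum fun j hj => ?_
        rw [← sum_congr rfl fun i hi => if_pos (hA j (mem_range.1 hj) i hi)]
        exact sum_le_sum_of_subset_of_nonneg (Ioc_subset_Ioc_left (by omega))
          fun _ _ _ => by positivity
    _ = ∑ i ∈ Ioc (t 0) (t (2 * s)) ∩ A, |b i| := by rw [sum_Ioc_cuts ht, sum_ite_mem]
    _ ≤ _ := sum_le_sum_of_subset_of_nonneg inter_subset_right fun _ _ _ => abs_nonneg _

theorem one_le_invLenSum_mul_sum_sq (ht : StrictMono t) (ht0 : t 0 = 0) (s : ℕ) (b : ℕ → ℝ)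
    (hb : ∑ i ∈ jumps t s, |b i| - ∑ i ∈ Icc 2 (t (2 * s)) \ jumps t s, |b i| = 1) :
    1 ≤ invLenSum t (2 * s) * ∑ i ∈ Icc 1 (t (2 * s)), csum b i ^ 2 := by
  have hjumps : ∑ i ∈ jumps t s, |b i| ≤
      ∑ j ∈ range (2 * s), meanAbs (csum b) (t j) (t (j + 1)) +
        ∑ j ∈ range (2 * s), ∑ i ∈ Ioc (t j + 1) (t (j + 1)), |b i| := by
    rw [sum_jumps ht, ← sum_add_distrib, sum_range_two_mul]
    refine sum_le_sum fun m _ => ?_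
    have := abs_le_meanAbs_add_meanAbs b (ht (show 2 * m < 2 * m + 1 by omega))
      (ht (show 2 * m + 1 < 2 * m + 1 + 1 by omega))
    linarith
  have hmean : 1 ≤ ∑ j ∈ range (2 * s), meanAbs (csum b) (t j) (t (j + 1)) := by
    linarith [sum_interior_le_sum_sdiff_jumps ht.monotone s b]
  have hcs := sq_sum_meanAbs_le ht.monotone (csum b) (2 * s)
  rw [ht0, ← Icc_add_one_left_eq_Ioc, zero_add] at hcs
  exact (one_le_pow₀ hmean).trans hcs

noncomputable def stepFun (t : ℕ → ℕ) (N : ℕ) (v : ℕ → ℝ) (i : ℕ) : ℝ :=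
  ∑ j ∈ range N, if i ∈ Ioc (t j) (t (j + 1)) then v j else 0

lemma stepFun_zero (t : ℕ → ℕ) (N : ℕ) (v : ℕ → ℝ) : stepFun t N v 0 = 0 :=
  sum_eq_zero fun _ _ => if_neg (by simp)

lemma stepFun_eq_of_mem (ht : Monotone t) {N : ℕ} (v : ℕ → ℝ) {i j : ℕ}
    (hj : j < N) (hi : i ∈ Ioc (t j) (t (j + 1))) : stepFun t N v i = v j := by
  rw [stepFun, sum_eq_single_of_mem j (mem_range.2 hj)
    fun k _ hk => if_neg (notMem_Ioc_cut ht hk hi), if_pos hi]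

lemma sum_sq_stepFun (ht : Monotone t) (N : ℕ) (v : ℕ → ℝ) :
    ∑ i ∈ Ioc (t 0) (t N), stepFun t N v i ^ 2 =
      ∑ j ∈ range N, ((t (j + 1) - t j : ℕ) : ℝ) * v j ^ 2 := by
  rw [← sum_Ioc_cuts ht]
  refine sum_congr rfl fun j hj => ?_
  rw [sum_congr rfl fun i hi => by rw [stepFun_eq_of_mem ht v (mem_range.1 hj) hi],
    sum_const, Nat.card_Ioc, nsmul_eq_mul]

noncomputable def winWeight (t : ℕ → ℕ) (N j : ℕ) : ℝ :=
  1 / (((t (j + 1) - t j : ℕ) : ℝ) * invLenSum t N)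

lemma winWeight_pos (ht : StrictMono t) {N : ℕ} (hN : 0 < N) (j : ℕ) : 0 < winWeight t N j :=
  one_div_pos.2 (mul_pos (cast_sub_pos ht j) (invLenSum_pos ht hN))

lemma sum_winWeight (ht : StrictMono t) {N : ℕ} (hN : 0 < N) :
    ∑ j ∈ range N, winWeight t N j = 1 := by
  simp only [winWeight, ← div_div, ← sum_div]
  exact div_self (invLenSum_pos ht hN).ne'

def BalancedCuts (t : ℕ → ℕ) (s : ℕ) : Prop :=
  ∀ m, m + 1 < s → t (2 * m + 2) - t (2 * m + 1) = t (2 * m + 3) - t (2 * m + 2)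

/-- The sign `(-1) ^ ((j + 1) / 2)` runs `+ - - + + - - ⋯`: it flips across each jump, between
windows `2m` and `2m + 1`, and is kept between windows `2m + 1` and `2m + 2`. -/
noncomputable def extremal (t : ℕ → ℕ) (s : ℕ) : ℕ → ℝ :=
  stepFun t (2 * s) fun j => (-1) ^ ((j + 1) / 2) * winWeight t (2 * s) j

lemma extremal_eq_of_mem (ht : Monotone t) {s i j : ℕ} (hj : j < 2 * s)
    (hi : i ∈ Ioc (t j) (t (j + 1))) :
    extremal t s i = (-1) ^ ((j + 1) / 2) * winWeight t (2 * s) j :=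
  stepFun_eq_of_mem ht _ hj hi

lemma abs_extremal_jump (ht : StrictMono t) {s m : ℕ} (hm : m < s) :
    |extremal t s (t (2 * m + 1) + 1) - extremal t s (t (2 * m + 1))| =
      winWeight t (2 * s) (2 * m) + winWeight t (2 * s) (2 * m + 1) := by
  set w := winWeight t (2 * s)
  have hw := winWeight_pos ht (show 0 < 2 * s by omega)
  rw [extremal_eq_of_mem ht.monotone (j := 2 * m + 1) (by omega)
      (mem_Ioc.2 ⟨by omega, ht (by omega)⟩),
    extremal_eq_of_mem ht.monotone (j := 2 * m) (by omega) (mem_Ioc.2 ⟨ht (by omega), le_rfl⟩),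
    show (2 * m + 1 + 1) / 2 = m + 1 by omega, show (2 * m + 1) / 2 = m by omega,
    show (-1 : ℝ) ^ (m + 1) * w (2 * m + 1) - (-1) ^ m * w (2 * m) =
      -((-1) ^ m * (w (2 * m) + w (2 * m + 1))) by ring,
    abs_neg, abs_mul, abs_pow, abs_neg, abs_one, one_pow, one_mul,
    abs_of_pos (add_pos (hw _) (hw _))]

lemma extremal_sub_pred_eq_zero (ht : StrictMono t) (ht0 : t 0 = 0) {s : ℕ}
    (hbal : BalancedCuts t s) {i : ℕ} (hi : i ∈ Icc 2 (t (2 * s)) \ jumps t s) :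
    extremal t s i - extremal t s (i - 1) = 0 := by
  rw [mem_sdiff, mem_Icc] at hi
  obtain ⟨j, hj, hij⟩ := exists_mem_Ioc_cut (t := t) (N := 2 * s) (i := i)
    (mem_Ioc.2 ⟨by omega, hi.1.2⟩)
  rw [extremal_eq_of_mem ht.monotone hj hij]
  rw [mem_Ioc] at hij
  by_cases hprev : t j < i - 1
  · rw [extremal_eq_of_mem ht.monotone hj (mem_Ioc.2 ⟨hprev, by omega⟩), sub_self]
  -- now `i = t j + 1`, which rules out `j = 0` and odd `j`
  obtain ⟨m, rfl | rfl⟩ := Nat.even_or_odd' j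
  · rcases m with _ | m
    · simp only [mul_zero, ht0] at hprev
      omega
    rw [show 2 * (m + 1) = 2 * m + 1 + 1 by ring] at hj hij hprev ⊢
    have hmid : i - 1 ∈ Ioc (t (2 * m + 1)) (t (2 * m + 1 + 1)) := by
      have := ht (show 2 * m + 1 < 2 * m + 1 + 1 by omega)
      exact mem_Ioc.2 ⟨by omega, by omega⟩
    rw [extremal_eq_of_mem ht.monotone (by omega) hmid, winWeight, winWeight,
      show 2 * m + 1 + 1 + 1 = 2 * m + 3 by ring, show 2 * m + 1 + 1 = 2 * m + 2 by ring,
      ← hbal m (by omega), show (2 * m + 2 + 1) / 2 = (2 * m + 2) / 2 by omega, sub_self]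
  · exact absurd (mem_image.2 ⟨m, mem_range.2 (by omega), by omega⟩) hi.2

lemma invLenSum_mul_sum_sq_extremal (ht : StrictMono t) {s : ℕ} (hs : 0 < s) :
    invLenSum t (2 * s) * ∑ i ∈ Ioc (t 0) (t (2 * s)), extremal t s i ^ 2 = 1 := by
  have hK := invLenSum_pos ht (show 0 < 2 * s by omega)
  have hsq : ∀ j, ((t (j + 1) - t j : ℕ) : ℝ) *
      ((-1) ^ ((j + 1) / 2) * winWeight t (2 * s) j) ^ 2 =
        winWeight t (2 * s) j / invLenSum t (2 * s) := fun j => by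
    have := cast_sub_pos ht j
    rw [mul_pow, ← pow_mul, pow_mul', neg_one_sq, one_pow, one_mul, winWeight]
    field_simp
  rw [extremal, sum_sq_stepFun ht.monotone, sum_congr rfl fun j _ => hsq j, ← sum_div,
    sum_winWeight ht (by omega)]
  field_simp

theorem exists_invLenSum_mul_sum_sq_eq_one (ht : StrictMono t) (ht0 : t 0 = 0) {s : ℕ}
    (hs : 0 < s) (hbal : BalancedCuts t s) :
    ∃ b : ℕ → ℝ,
      ∑ i ∈ jumps t s, |b i| - ∑ i ∈ Icc 2 (t (2 * s)) \ jumps t s, |b i| = 1 ∧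
        invLenSum t (2 * s) * ∑ i ∈ Icc 1 (t (2 * s)), csum b i ^ 2 = 1 := by
  refine ⟨fun i => extremal t s i - extremal t s (i - 1), ?_, ?_⟩ <;> beta_reduce
  · rw [sum_jumps ht, sum_congr rfl fun m hm => by
        rw [Nat.add_sub_cancel, abs_extremal_jump ht (mem_range.1 hm)],
      ← sum_range_two_mul, sum_winWeight ht (by omega),
      sum_eq_zero fun i hi => by rw [extremal_sub_pred_eq_zero ht ht0 hbal hi, abs_zero],
      sub_zero]
  · rw [funext (csum_sub_pred (extremal t s) (stepFun_zero _ _ _)), ← zero_add 1,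
      Icc_add_one_left_eq_Ioc, ← ht0]
    exact invLenSum_mul_sum_sq_extremal ht hs

theorem sInf_eq_div_mul_invLenSum (ht : StrictMono t) (ht0 : t 0 = 0) {s : ℕ} (hs : 0 < s)
    (hbal : BalancedCuts t s) {α : ℝ} (hα : 0 ≤ α) :
    sInf {c : ℝ | ∃ b : ℕ → ℝ,
        (∑ j ∈ jumps t s, |b j|) - (∑ j ∈ Icc 2 (t (2 * s)) \ jumps t s, |b j|) = 1 ∧
        c = α * (∑ i ∈ Icc 1 (t (2 * s)), (csum b i) ^ 2) / t (2 * s)} =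
      α / (t (2 * s) * invLenSum t (2 * s)) := by
  have hn : (0 : ℝ) < t (2 * s) := by
    have := ht (show 0 < 2 * s by omega)
    rw [ht0] at this
    exact_mod_cast this
  have hK := invLenSum_pos ht (show 0 < 2 * s by omega)
  obtain ⟨b₀, hb₀, hb₀K⟩ := exists_invLenSum_mul_sum_sq_eq_one ht ht0 hs hbal
  refine IsLeast.csInf_eq ⟨⟨b₀, hb₀, ?_⟩, ?_⟩
  · rw [eq_one_div_of_mul_eq_one_right hb₀K]
    field_simp
  · rintro c ⟨b, hb, rfl⟩
    calc α / (t (2 * s) * invLenSum t (2 * s)) = α * (1 / invLenSum t (2 * s)) / t (2 * s) := by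
          field_simp
      _ ≤ α * (∑ i ∈ Icc 1 (t (2 * s)), csum b i ^ 2) / t (2 * s) := by
        gcongr
        exact (div_le_iff₀' hK).2 (one_le_invLenSum_mul_sum_sq ht ht0 s b hb)

end Cuts

lemma pos_zero (d : ℕ → ℕ) : pos d 0 = 0 := by simp [pos]

lemma pos_succ (d : ℕ → ℕ) (j : ℕ) : pos d (j + 1) = pos d j + d (j + 1) :=
  sum_Icc_succ_top (by omega) d

/-- Length of the `k`-th window (`k ≥ 1`) of the cut sequence `pos (blockLen d s)`. The first and
the last block form one window each and every other block is cut in half; the tail of unit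
windows only keeps the cut points strictly increasing. -/
def blockLen (d : ℕ → ℕ) (s k : ℕ) : ℕ :=
  if k = 1 then d 1 else if k = 2 * s then d (s + 1)
  else if k < 2 * s then d (k / 2 + 1) / 2 else 1

section BlockLen

variable {d : ℕ → ℕ} {s : ℕ}

lemma blockLen_of_lt {k : ℕ} (hk : 2 ≤ k) (hks : k < 2 * s) :
    blockLen d s k = d (k / 2 + 1) / 2 := by
  rw [blockLen, if_neg (by omega), if_neg (by omega), if_pos hks]

lemma blockLen_two_mul : blockLen d s (2 * s) = d (s + 1) := by
  rw [blockLen, if_neg (by omega), if_pos rfl]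

lemma strictMono_pos_blockLen (hd : ∀ j ∈ Icc 1 (s + 1), 2 ≤ d j) :
    StrictMono (pos (blockLen d s)) := by
  refine strictMono_nat_of_lt_succ fun k => ?_
  rw [pos_succ, lt_add_iff_pos_right, blockLen]
  have h1 := hd 1 (by simp)
  have hs1 := hd (s + 1) (by simp)
  split_ifs
  · omega
  · omega
  · have := hd ((k + 1) / 2 + 1) (mem_Icc.2 ⟨by omega, by omega⟩)
    omega
  · omega

lemma pos_blockLen_two_mul_add_one (heven : ∀ j ∈ Icc 2 s, Even (d j)) {m : ℕ} (hm : m < s) :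
    pos (blockLen d s) (2 * m + 1) = pos d (m + 1) := by
  induction m with
  | zero => simp [pos, blockLen]
  | succ m ih =>
    obtain ⟨c, hc⟩ := heven (m + 1 + 1) (mem_Icc.2 ⟨by omega, by omega⟩)
    rw [show 2 * (m + 1) + 1 = 2 * m + 1 + 1 + 1 by ring, pos_succ, pos_succ, ih (by omega),
      blockLen_of_lt (by omega) (by omega), blockLen_of_lt (by omega) (by omega),
      pos_succ d (m + 1), show (2 * m + 1 + 1) / 2 + 1 = m + 1 + 1 by omega,
      show (2 * m + 1 + 1 + 1) / 2 + 1 = m + 1 + 1 by omega]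
    omega

lemma pos_blockLen_two_mul (hs : 1 ≤ s) (heven : ∀ j ∈ Icc 2 s, Even (d j)) :
    pos (blockLen d s) (2 * s) = pos d (s + 1) := by
  obtain ⟨r, rfl⟩ : ∃ r, s = r + 1 := ⟨s - 1, by omega⟩
  rw [show 2 * (r + 1) = 2 * r + 1 + 1 by ring, pos_succ,
    pos_blockLen_two_mul_add_one heven (by omega), ← show 2 * (r + 1) = 2 * r + 1 + 1 by ring,
    blockLen_two_mul, pos_succ d (r + 1)]

lemma jumps_pos_blockLen (heven : ∀ j ∈ Icc 2 s, Even (d j)) :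
    jumps (pos (blockLen d s)) s = jumpSet d s := by
  rw [jumps, jumpSet, ← Ico_add_one_right_eq_Icc, ← zero_add 1, ← image_add_right_Ico, zero_add,
    ← range_eq_Ico, image_image]
  exact image_congr fun m hm => by
    simp only [Function.comp, pos_blockLen_two_mul_add_one heven (mem_range.1 hm)]

lemma invLenSum_pos_blockLen (hs : 1 ≤ s) (heven : ∀ j ∈ Icc 2 s, Even (d j)) :
    invLenSum (pos (blockLen d s)) (2 * s) =
      1 / (d 1 : ℝ) + ∑ j ∈ Icc 2 s, 4 / (d j : ℝ) + 1 / (d (s + 1) : ℝ) := by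
  obtain ⟨r, rfl⟩ : ∃ r, s = r + 1 := ⟨s - 1, by omega⟩
  have hhalf : ∀ m < r, ∀ k, k / 2 = m + 1 → 2 ≤ k → k < 2 * (r + 1) →
      1 / (blockLen d (r + 1) k : ℝ) = 2 / d (m + 2) := fun m hm k hk hk2 hks => by
    rw [blockLen_of_lt hk2 hks, hk, Nat.cast_div (even_iff_two_dvd.1
      (heven (m + 1 + 1) (mem_Icc.2 ⟨by omega, by omega⟩))) two_ne_zero]
    simp
  have hpair : ∀ m ∈ range r, 1 / (blockLen d (r + 1) (2 * m + 1 + 1) : ℝ) +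
      1 / (blockLen d (r + 1) (2 * m + 1 + 1 + 1) : ℝ) = 4 / d (m + 2) := fun m hm => by
    rw [mem_range] at hm
    rw [hhalf m hm _ (by omega) (by omega) (by omega),
      hhalf m hm _ (by omega) (by omega) (by omega)]
    ring
  simp only [invLenSum, pos_succ, Nat.add_sub_cancel_left]
  rw [show 2 * (r + 1) = 2 * r + 1 + 1 by ring, sum_range_succ, sum_range_succ',
    sum_range_two_mul, sum_congr rfl hpair, ← show 2 * (r + 1) = 2 * r + 1 + 1 by ring,
    blockLen_two_mul, range_eq_Ico, sum_Ico_add' (fun j => 4 / (d j : ℝ)),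
    ← Ico_add_one_right_eq_Icc, zero_add, zero_add, blockLen, if_pos rfl,
    add_comm (∑ x ∈ Ico 2 (r + 2), _)]
  rfl

end BlockLen

lemma exists_balanced_cuts {n s : ℕ} (hs : 1 ≤ s) {d : ℕ → ℕ}
    (hd : ∀ j ∈ Icc 1 (s + 1), 2 ≤ d j) (heven : ∀ j ∈ Icc 2 s, Even (d j))
    (hsum : ∑ j ∈ Icc 1 (s + 1), d j = n) :
    ∃ t : ℕ → ℕ, StrictMono t ∧ t 0 = 0 ∧ t (2 * s) = n ∧ jumps t s = jumpSet d s ∧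
      BalancedCuts t s ∧
      invLenSum t (2 * s) = 1 / (d 1 : ℝ) + ∑ j ∈ Icc 2 s, 4 / (d j : ℝ) + 1 / (d (s + 1) : ℝ) := by
  refine ⟨pos (blockLen d s), strictMono_pos_blockLen hd, pos_zero _,
    (pos_blockLen_two_mul hs heven).trans hsum, jumps_pos_blockLen heven, fun m hm => ?_,
    invLenSum_pos_blockLen hs heven⟩
  simp only [pos_succ, Nat.add_sub_cancel_left]
  rw [blockLen_of_lt (by omega) (by omega), blockLen_of_lt (by omega) (by omega)]
  congr 2
  omega

theorem stmt13 (n s : ℕ) (hs : 1 ≤ s) (d : ℕ → ℕ)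
    (hd : ∀ j ∈ Finset.Icc 1 (s + 1), 2 ≤ d j)
    (heven : ∀ j ∈ Finset.Icc 2 s, Even (d j))
    (hsum : ∑ j ∈ Finset.Icc 1 (s + 1), d j = n) :
    sInf {c : ℝ | ∃ b : ℕ → ℝ,
        (∑ j ∈ jumpSet d s, |b j|) -
          (∑ j ∈ Finset.Icc 2 n \ jumpSet d s, |b j|) = 1 ∧
        c = ((s : ℝ) + 1) * (∑ i ∈ Finset.Icc 1 n, (csum b i) ^ 2) / n} =
      ((s : ℝ) + 1) /
        ((n : ℝ) / d 1 + (∑ j ∈ Finset.Icc 2 s, 4 * (n : ℝ) / d j) +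
          (n : ℝ) / d (s + 1)) := by
  obtain ⟨t, ht, ht0, htn, hJ, hbal, hK⟩ := exists_balanced_cuts hs hd heven hsum
  have h := sInf_eq_div_mul_invLenSum ht ht0 hs hbal (α := (s : ℝ) + 1) (by positivity)
  rw [hJ, htn, hK] at h
  rw [h, mul_add, mul_add, mul_sum]
  simp only [mul_div_assoc', mul_one, mul_comm (n : ℝ) 4]
end

section
/- (KKT comparison inequality.) Let ε ∈ ℝⁿ, λ ≥ λ* > 0. Suppose β̂ satisfies X^T X(β̂ − β⁰) + λζ̂ = X^T ε with ζ̂ ∈ ∂‖β̂‖₁, and β* satisfies X^T X(β* − β⁰) + λ*ζ* = 0 with ζ* ∈ ∂‖β*‖₁. Then ‖X(β̂ − β*)‖₂² + λ‖β̂‖₁ − λ* β̂^T ζ* ≤ (β̂ − β*)^T X^T ε + (λ − λ*)‖β*‖₁. -/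
/-! Subtracting the two KKT equations eliminates `β⁰`; pairing the difference with `β̂ - β*`
turns the Gram term into `‖X(β̂ - β*)‖₂²`, and the subgradient identities turn `ζ̂ᵀβ̂` and
`ζ*ᵀβ*` into `ℓ¹` norms. The only term left over is `λ ζ̂ᵀβ*`, which is at most `λ ‖β*‖₁`
because `‖ζ̂‖_∞ ≤ 1` and `λ ≥ 0`. -/

open Finset

open Matrix

lemma qf_eq_dotProduct {n p : ℕ} (X : Matrix (Fin n) (Fin p) ℝ) (b : Fin p → ℝ) :
    qf X b = X *ᵥ b ⬝ᵥ X *ᵥ b := by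
  simp only [qf, dotProduct, sq]

lemma dotProduct_gram_mulVec {n p : ℕ} (X : Matrix (Fin n) (Fin p) ℝ) (b : Fin p → ℝ) :
    b ⬝ᵥ (Xᵀ * X) *ᵥ b = qf X b := by
  rw [← mulVec_mulVec, dotProduct_transpose_mulVec, qf_eq_dotProduct]

lemma dotProduct_le_l1 {p : ℕ} {z : Fin p → ℝ} (hz : ∀ j, |z j| ≤ 1) (b : Fin p → ℝ) :
    z ⬝ᵥ b ≤ l1 b :=
  Finset.sum_le_sum fun j _ => calc
    z j * b j ≤ |z j * b j| := le_abs_self _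
    _ = |z j| * |b j| := abs_mul _ _
    _ ≤ |b j| := mul_le_of_le_one_left (abs_nonneg _) (hz j)

lemma mulVec_sub_add_smul_sub_smul {m R : Type*} [Fintype m] [CommRing R] (G : Matrix m m R)
    (y : m → R) (a b : R) (u₀ u v z w : m → R)
    (hu : G *ᵥ (u - u₀) + a • z = y) (hv : G *ᵥ (v - u₀) + b • w = 0) :
    G *ᵥ (u - v) + a • z - b • w = y := by
  rw [← hu, ← sub_sub_sub_cancel_right u v u₀, mulVec_sub, eq_neg_of_add_eq_zero_left hv]
  abel

theorem stmt18_general {n p : ℕ} (X : Matrix (Fin n) (Fin p) ℝ) (eps : Fin n → ℝ)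
    (lam lams : ℝ) (hlams : 0 < lams) (hle : lams ≤ lam)
    (beta0 betah betas zetah zetas : Fin p → ℝ)
    (hKKTh : ∀ j, ((X.transpose * X).mulVec (betah - beta0)) j + lam * zetah j =
      (X.transpose.mulVec eps) j)
    (hzetah1 : ∀ j, |zetah j| ≤ 1)
    (hzetah2 : (∑ j, zetah j * betah j) = l1 betah)
    (hKKTs : ∀ j, ((X.transpose * X).mulVec (betas - beta0)) j + lams * zetas j = 0)
    (hzetas2 : (∑ j, zetas j * betas j) = l1 betas) :
    qf X (betah - betas) + lam * l1 betah - lams * (∑ j, betah j * zetas j) ≤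
      (∑ i, X.mulVec (betah - betas) i * eps i) + (lam - lams) * l1 betas := by
  have hdiff := mulVec_sub_add_smul_sub_smul _ _ _ _ _ _ _ _ _
    (funext hKKTh) (funext hKKTs)
  have hpaired := congrArg (dotProduct (betah - betas)) hdiff
  rw [dotProduct_sub, dotProduct_add, dotProduct_smul, dotProduct_smul, smul_eq_mul, smul_eq_mul,
    dotProduct_gram_mulVec, dotProduct_transpose_mulVec] at hpaired
  simp only [sub_dotProduct] at hpaired
  have hcross := mul_le_mul_of_nonneg_left (dotProduct_le_l1 hzetah1 betas) (hlams.le.trans hle)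
  change zetah ⬝ᵥ betah = l1 betah at hzetah2
  change zetas ⬝ᵥ betas = l1 betas at hzetas2
  change _ - lams * (betah ⬝ᵥ zetas) ≤ X *ᵥ (betah - betas) ⬝ᵥ eps + _
  rw [dotProduct_comm] at hzetah2 hzetas2 hcross
  rw [dotProduct_comm (X *ᵥ _)]
  linear_combination hpaired + hcross - lam * hzetah2 - lams * hzetas2

theorem stmt18 {n p : ℕ} (X : Matrix (Fin n) (Fin p) ℝ) (eps : Fin n → ℝ)
    (lam lams : ℝ) (hlams : 0 < lams) (hle : lams ≤ lam)
    (beta0 betah betas zetah zetas : Fin p → ℝ)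
    (hKKTh : ∀ j, ((X.transpose * X).mulVec (betah - beta0)) j + lam * zetah j =
      (X.transpose.mulVec eps) j)
    (hzetah1 : ∀ j, |zetah j| ≤ 1)
    (hzetah2 : (∑ j, zetah j * betah j) = l1 betah)
    (hKKTs : ∀ j, ((X.transpose * X).mulVec (betas - beta0)) j + lams * zetas j = 0)
    (hzetas1 : ∀ j, |zetas j| ≤ 1)
    (hzetas2 : (∑ j, zetas j * betas j) = l1 betas) :
    qf X (betah - betas) + lam * l1 betah - lams * (∑ j, betah j * zetas j) ≤
      (∑ i, X.mulVec (betah - betas) i * eps i) + (lam - lams) * l1 betas :=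
  stmt18_general X eps lam lams hlams hle beta0 betah betas zetah zetas hKKTh hzetah1 hzetah2 hKKTs
    hzetas2
end
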